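/- arXiv:2305.12340 — 6 statements merged into one kernel-verified Lean document; each statement's English description precedes it below -/
import Mathlib

section
/- Let m ≥ 1 and let F : ℝ^m → ℝ be a smooth (C^∞) function whose critical set {x ∈ ℝ^m : ∇F(x) = 0} has m-dimensional Lebesgue measure zero. Then for every Borel set A ⊆ ℝ of one-dimensional Lebesgue measure zero, the preimage F⁻¹(A) has m-dimensional Lebesgue measure zero. -/
open MeasureTheory

/-- If `F : ℝ^m → ℝ` is smooth and its critical set has Lebesgue measure
zero, then the preimage under `F` of any Borel null set of `ℝ` is a null set of `ℝ^m`. -/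
theorem smooth_preimage_null_of_critical_null
    (m : ℕ) (hm : 1 ≤ m)
    (F : EuclideanSpace ℝ (Fin m) → ℝ)
    (hF : ContDiff ℝ (⊤ : ℕ∞) F)
    (hcrit : volume {x : EuclideanSpace ℝ (Fin m) | fderiv ℝ F x = 0} = 0) :
    ∀ A : Set ℝ, MeasurableSet A → volume A = 0 →
      volume (F ⁻¹' A) = 0 := by
  intro A hA hA0
  have hFdiff : Differentiable ℝ F := hF.differentiable (by simp)
  -- local step: around every noncritical point, the preimage of `A` is null
  have key : ∀ x : EuclideanSpace ℝ (Fin m), fderiv ℝ F x ≠ 0 →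
      ∃ U ∈ nhds x, volume (F ⁻¹' A ∩ U) = 0 := by
    intro x hx
    set L : EuclideanSpace ℝ (Fin m) →L[ℝ] ℝ := fderiv ℝ F x with hL
    obtain ⟨v, hv⟩ : ∃ v, L v ≠ 0 := by
      by_contra h
      push_neg at h
      exact hx (ContinuousLinearMap.ext fun v => by simp [h v])
    set w : EuclideanSpace ℝ (Fin m) := (L v)⁻¹ • v with hw
    have hLw : L w = 1 := by
      simp [hw, _root_.map_smul, smul_eq_mul, inv_mul_cancel₀ hv]
    set G : EuclideanSpace ℝ (Fin m) → EuclideanSpace ℝ (Fin m) :=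
      fun y => y + (F y - L y) • w with hG
    -- `L ∘ G = F`
    have hGF : ∀ y, L (G y) = F y := by
      intro y
      simp only [hG, map_add, _root_.map_smul, hLw, smul_eq_mul, mul_one]
      ring
    -- `G` is C¹ and its derivative at `x` is the identity
    have hGsmooth : ContDiff ℝ 1 G := by
      exact contDiff_id.add (((hF.of_le (by simp)).sub L.contDiff).smul
        (contDiff_const (c := w)))
    have hder : HasFDerivAt G
        ((ContinuousLinearEquiv.refl ℝ (EuclideanSpace ℝ (Fin m)) :
          EuclideanSpace ℝ (Fin m) ≃L[ℝ] EuclideanSpace ℝ (Fin m)) :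
          EuclideanSpace ℝ (Fin m) →L[ℝ] EuclideanSpace ℝ (Fin m)) x := by
      have h1 : HasFDerivAt (fun y => F y - L y) (fderiv ℝ F x - L) x :=
        (hFdiff x).hasFDerivAt.sub L.hasFDerivAt
      have h2 : HasFDerivAt (fun y => (F y - L y) • w)
          ((fderiv ℝ F x - L).smulRight w) x := h1.smul_const w
      have h3 := (hasFDerivAt_id x).add h2
      convert h3 using 1
      case e'_4 => rfl
      case e'_5 => rfl
      case e'_6 => rfl
      case e'_8 => rfl
      case e'_9 => rfl
      case e'_10 => rfl
      case e'_11 => rfl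
      rw [← hL, sub_self]
      ext z
      simp
    have hG1 : ContDiffAt ℝ 1 G x := hGsmooth.contDiffAt
    set Φ := hG1.toOpenPartialHomeomorph G hder one_ne_zero with hΦ
    have hΦcoe : (Φ : EuclideanSpace ℝ (Fin m) → EuclideanSpace ℝ (Fin m)) = G :=
      hG1.toOpenPartialHomeomorph_coe hder one_ne_zero
    have hxΦ : x ∈ Φ.source := hG1.mem_toOpenPartialHomeomorph_source hder one_ne_zero
    set g := hG1.localInverse hder one_ne_zero with hg
    have hgsymm : g = Φ.symm := rfl
    have hginv : ∀ y ∈ Φ.source, g (G y) = y := by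
      intro y hy
      rw [hgsymm, ← hΦcoe]
      exact Φ.left_inv hy
    -- the local inverse is differentiable on a neighborhood `V` of `G x`
    have hginv_smooth : ContDiffAt ℝ 1 g (G x) := hG1.to_localInverse hder one_ne_zero
    obtain ⟨V, hV, hVdiff⟩ : ∃ V ∈ nhds (G x), ∀ z ∈ V, DifferentiableAt ℝ g z := by
      have h := hginv_smooth.eventually (by simp)
      exact ⟨{y | ContDiffAt ℝ 1 g y}, h,
        fun z hz => ContDiffAt.differentiableAt (show ContDiffAt ℝ 1 g z from hz) one_ne_zero⟩
    -- the preimage of `A` under the linear map `L` is null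
    have hLpre : volume (⇑L ⁻¹' A) = 0 := by
      have hsurj : Function.Surjective (L : EuclideanSpace ℝ (Fin m) →ₗ[ℝ] ℝ) := by
        intro r
        refine ⟨(r / L v) • v, ?_⟩
        simp only [ContinuousLinearMap.coe_coe, _root_.map_smul, smul_eq_mul]
        field_simp
      have hiff := MeasureTheory.ae_comp_linearMap_mem_iff
        (L := ((L : EuclideanSpace ℝ (Fin m) →ₗ[ℝ] ℝ)))
        (μ := (volume : Measure (EuclideanSpace ℝ (Fin m)))) (ν := (volume : Measure ℝ))
        hsurj (s := Aᶜ) hA.compl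
      have hright : ∀ᵐ y ∂(volume : Measure ℝ), y ∈ Aᶜ := by
        rw [ae_iff]
        simpa using hA0
      have hleft := hiff.mpr hright
      rw [ae_iff] at hleft
      simpa [Set.preimage] using hleft
    -- assemble
    refine ⟨Φ.source ∩ G ⁻¹' V,
      Filter.inter_mem (Φ.open_source.mem_nhds hxΦ)
        (hGsmooth.continuous.continuousAt.preimage_mem_nhds hV), ?_⟩
    have hsub : F ⁻¹' A ∩ (Φ.source ∩ G ⁻¹' V) ⊆ g '' (⇑L ⁻¹' A ∩ V) := by
      rintro y ⟨hyA, hyS, hyV⟩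
      exact ⟨G y, ⟨by simpa [Set.mem_preimage, hGF y] using hyA, hyV⟩, hginv y hyS⟩
    refine measure_mono_null hsub ?_
    exact addHaar_image_eq_zero_of_differentiableOn_of_addHaar_eq_zero volume
      (fun z hz => (hVdiff z hz.2).differentiableWithinAt)
      (measure_mono_null Set.inter_subset_left hLpre)
  -- global step
  have h1 : volume (F ⁻¹' A \ {x : EuclideanSpace ℝ (Fin m) | fderiv ℝ F x = 0}) = 0 := by
    apply measure_null_of_locally_null
    intro x hx
    obtain ⟨U, hU, hU0⟩ := key x hx.2
    refine ⟨(F ⁻¹' A \ {x : EuclideanSpace ℝ (Fin m) | fderiv ℝ F x = 0}) ∩ U,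
      Filter.inter_mem self_mem_nhdsWithin (mem_nhdsWithin_of_mem_nhds hU), ?_⟩
    exact measure_mono_null (fun y hy => Set.mem_inter hy.1.1 hy.2) hU0
  have hsub : F ⁻¹' A ⊆
      (F ⁻¹' A \ {x : EuclideanSpace ℝ (Fin m) | fderiv ℝ F x = 0}) ∪
        {x : EuclideanSpace ℝ (Fin m) | fderiv ℝ F x = 0} := by
    intro y hy
    by_cases h : y ∈ {x : EuclideanSpace ℝ (Fin m) | fderiv ℝ F x = 0}
    · exact Or.inr h
    · exact Or.inl ⟨hy, h⟩
  exact measure_mono_null hsub (measure_union_null h1 hcrit)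
end

section
/- Fix integers n ≥ 1 and N ≥ 2, let μ be any Borel probability measure on (ℝ^n)^N, and let φ : [0,∞) → ℝ be measurable with ‖φ‖²_{L²(ρ)} := (1/(N(N−1))) Σ_{i ≠ j} ∫ φ(‖x_i − x_j‖)² ‖x_i − x_j‖² dμ(X) < ∞. Then ‖f_φ‖²_{L²(μ)} := ∫ (1/N) Σ_{i=1}^N ‖f_φ(X)_i‖² dμ(X) satisfies ‖f_φ‖²_{L²(μ)} ≤ ((N−1)/N)² ‖φ‖²_{L²(ρ)}. -/
open MeasureTheory Finset
open scoped ENNReal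

/-- The interaction velocity field `f_φ(X)_i = (1/N) ∑_{j ≠ i} φ(‖x_j − x_i‖)(x_j − x_i)`. -/
noncomputable def interactionField (n N : ℕ) (φ : ℝ → ℝ)
    (X : Fin N → EuclideanSpace ℝ (Fin n)) (i : Fin N) : EuclideanSpace ℝ (Fin n) :=
  (N : ℝ)⁻¹ • ∑ j ∈ Finset.univ.erase i, φ ‖X j - X i‖ • (X j - X i)

/-- boundedness `‖f_φ‖²_{L²(μ)} ≤ ((N−1)/N)² ‖φ‖²_{L²(ρ)}` of the operator
`A : φ ↦ f_φ` in the Euclidean case. -/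
theorem interactionField_sq_norm_le
    (n N : ℕ) (hn : 1 ≤ n) (hN : 2 ≤ N)
    (μ : Measure (Fin N → EuclideanSpace ℝ (Fin n))) [IsProbabilityMeasure μ]
    (φ : ℝ → ℝ) (hφ : Measurable φ)
    (hρfin : ((N * (N - 1) : ℕ) : ℝ≥0∞)⁻¹ *
        ∑ i : Fin N, ∑ j ∈ Finset.univ.erase i,
          ∫⁻ X, ENNReal.ofReal ((φ ‖X i - X j‖) ^ 2 * ‖X i - X j‖ ^ 2) ∂μ ≠ ⊤) :
    ∫⁻ X, ENNReal.ofReal ((N : ℝ)⁻¹ * ∑ i : Fin N, ‖interactionField n N φ X i‖ ^ 2) ∂μ ≤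
      ENNReal.ofReal ((((N : ℝ) - 1) / (N : ℝ)) ^ 2) *
        (((N * (N - 1) : ℕ) : ℝ≥0∞)⁻¹ *
          ∑ i : Fin N, ∑ j ∈ Finset.univ.erase i,
            ∫⁻ X, ENNReal.ofReal ((φ ‖X i - X j‖) ^ 2 * ‖X i - X j‖ ^ 2) ∂μ) := by
  have hNpos : (0:ℝ) < N := by positivity
  have hN1 : (0:ℝ) < (N:ℝ) - 1 := by
    have : (2:ℝ) ≤ N := by exact_mod_cast hN
    linarith
  set c : ℝ := (((N : ℝ) - 1) / N) ^ 2 * ((N : ℝ) * ((N : ℝ) - 1))⁻¹ with hc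
  have hc0 : 0 ≤ c := by positivity
  -- pointwise bound
  have key : ∀ X : Fin N → EuclideanSpace ℝ (Fin n),
      (N : ℝ)⁻¹ * ∑ i : Fin N, ‖interactionField n N φ X i‖ ^ 2 ≤
      c * ∑ i : Fin N, ∑ j ∈ Finset.univ.erase i,
          (φ ‖X i - X j‖) ^ 2 * ‖X i - X j‖ ^ 2 := by
    intro X
    have key1 : ∀ i : Fin N, ‖interactionField n N φ X i‖ ^ 2 ≤
        (N:ℝ)⁻¹ ^ 2 * (((N:ℝ) - 1) *
          ∑ j ∈ Finset.univ.erase i, (φ ‖X i - X j‖) ^ 2 * ‖X i - X j‖ ^ 2) := by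
      intro i
      have h1 : ‖interactionField n N φ X i‖ ≤
          (N:ℝ)⁻¹ * ∑ j ∈ Finset.univ.erase i, ‖φ ‖X j - X i‖ • (X j - X i)‖ := by
        rw [interactionField, norm_smul]
        gcongr
        · simp
        · exact norm_sum_le _ _
      have h2 : ‖interactionField n N φ X i‖ ^ 2 ≤
          ((N:ℝ)⁻¹ * ∑ j ∈ Finset.univ.erase i, ‖φ ‖X j - X i‖ • (X j - X i)‖) ^ 2 :=
        pow_le_pow_left₀ (norm_nonneg _) h1 2
      refine h2.trans ?_
      rw [mul_pow]
      gcongr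
      have := sq_sum_le_card_mul_sum_sq (s := Finset.univ.erase i)
        (f := fun j => ‖φ ‖X j - X i‖ • (X j - X i)‖)
      refine this.trans ?_
      have hcard : ((Finset.univ.erase i).card : ℝ) = (N:ℝ) - 1 := by
        rw [Finset.card_erase_of_mem (Finset.mem_univ i)]
        simp
        have : 1 ≤ N := by omega
        push_cast [Nat.cast_sub this]
        ring
      rw [hcard]
      gcongr with j hj
      rw [norm_smul, mul_pow, norm_sub_rev]
      simp [sq_abs, norm_sub_rev (X i)]
    calc (N : ℝ)⁻¹ * ∑ i : Fin N, ‖interactionField n N φ X i‖ ^ 2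
        ≤ (N : ℝ)⁻¹ * ∑ i : Fin N, (N:ℝ)⁻¹ ^ 2 * (((N:ℝ) - 1) *
          ∑ j ∈ Finset.univ.erase i, (φ ‖X i - X j‖) ^ 2 * ‖X i - X j‖ ^ 2) := by
          gcongr with i
          exact key1 i
      _ = c * ∑ i : Fin N, ∑ j ∈ Finset.univ.erase i,
            (φ ‖X i - X j‖) ^ 2 * ‖X i - X j‖ ^ 2 := by
          rw [hc, Finset.mul_sum, Finset.mul_sum]
          congr 1; ext i
          field_simp
  -- measurability
  have hmeas : ∀ i j : Fin N, Measurable fun X : Fin N → EuclideanSpace ℝ (Fin n) =>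
      ENNReal.ofReal ((φ ‖X i - X j‖) ^ 2 * ‖X i - X j‖ ^ 2) := by
    intro i j
    have hd : Measurable fun X : Fin N → EuclideanSpace ℝ (Fin n) => X i - X j :=
      (measurable_pi_apply i).sub (measurable_pi_apply j)
    exact (((hφ.comp hd.norm).pow_const 2).mul (hd.norm.pow_const 2)).ennreal_ofReal
  -- cast of the constant
  have hcast : ENNReal.ofReal c =
      ENNReal.ofReal ((((N : ℝ) - 1) / (N : ℝ)) ^ 2) * ((N * (N - 1) : ℕ) : ℝ≥0∞)⁻¹ := by
    rw [hc, ENNReal.ofReal_mul (by positivity)]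
    congr 1
    have h1 : (1:ℕ) ≤ N := by omega
    have hcastR : ((N * (N - 1) : ℕ) : ℝ) = (N : ℝ) * ((N : ℝ) - 1) := by
      push_cast [Nat.cast_sub h1]
      ring
    rw [← hcastR, ENNReal.ofReal_inv_of_pos (by rw [hcastR]; positivity),
      ENNReal.ofReal_natCast]
  calc ∫⁻ X, ENNReal.ofReal ((N : ℝ)⁻¹ * ∑ i : Fin N, ‖interactionField n N φ X i‖ ^ 2) ∂μ
      ≤ ∫⁻ X, ENNReal.ofReal (c * ∑ i : Fin N, ∑ j ∈ Finset.univ.erase i,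
          (φ ‖X i - X j‖) ^ 2 * ‖X i - X j‖ ^ 2) ∂μ :=
        lintegral_mono fun X => ENNReal.ofReal_le_ofReal (key X)
    _ = ENNReal.ofReal c * ∫⁻ X, ENNReal.ofReal (∑ i : Fin N, ∑ j ∈ Finset.univ.erase i,
          (φ ‖X i - X j‖) ^ 2 * ‖X i - X j‖ ^ 2) ∂μ := by
        simp_rw [ENNReal.ofReal_mul hc0]
        exact lintegral_const_mul' _ _ ENNReal.ofReal_ne_top
    _ = ENNReal.ofReal c * ∑ i : Fin N, ∑ j ∈ Finset.univ.erase i,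
          ∫⁻ X, ENNReal.ofReal ((φ ‖X i - X j‖) ^ 2 * ‖X i - X j‖ ^ 2) ∂μ := by
        congr 1
        have : ∀ X : Fin N → EuclideanSpace ℝ (Fin n),
            ENNReal.ofReal (∑ i : Fin N, ∑ j ∈ Finset.univ.erase i,
              (φ ‖X i - X j‖) ^ 2 * ‖X i - X j‖ ^ 2) =
            ∑ i : Fin N, ∑ j ∈ Finset.univ.erase i,
              ENNReal.ofReal ((φ ‖X i - X j‖) ^ 2 * ‖X i - X j‖ ^ 2) := by
          intro X
          rw [ENNReal.ofReal_sum_of_nonneg (fun i _ =>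
            Finset.sum_nonneg fun j _ => by positivity)]
          exact Finset.sum_congr rfl fun i _ =>
            ENNReal.ofReal_sum_of_nonneg fun j _ => by positivity
        simp_rw [this]
        rw [lintegral_finset_sum _ fun i _ => Finset.measurable_sum _ fun j _ => hmeas i j]
        exact Finset.sum_congr rfl fun i _ => lintegral_finset_sum _ fun j _ => hmeas i j
    _ = ENNReal.ofReal ((((N : ℝ) - 1) / (N : ℝ)) ^ 2) *
        (((N * (N - 1) : ℕ) : ℝ≥0∞)⁻¹ *
          ∑ i : Fin N, ∑ j ∈ Finset.univ.erase i,
            ∫⁻ X, ENNReal.ofReal ((φ ‖X i - X j‖) ^ 2 * ‖X i - X j‖ ^ 2) ∂μ) := by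
        rw [hcast, mul_assoc]
end

section
/- Fix integers n ≥ 1 and N ≥ 2, let μ be any Borel probability measure on (ℝ^n)^N, and let φ : [0,∞) → ℝ be measurable with ‖φ‖²_{L²(ρ)} := (1/(N(N−1))) Σ_{i ≠ j} ∫ φ(‖x_i − x_j‖)² ‖x_i − x_j‖² dμ(X) < ∞. Then ‖f_φ‖²_{L²(μ)} = ((N−1)/N²) ‖φ‖²_{L²(ρ)} + (1/N³) Σ_{(i,j,k) pairwise distinct} ∫ φ(‖x_i − x_j‖) φ(‖x_i − x_k‖) ⟨x_j − x_i, x_k − x_i⟩ dμ(X), where every cross-term integrand is μ-integrable and the sum runs over all ordered triples of pairwise distinct indices in {1,…,N}. -/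
open MeasureTheory Finset
open scoped ENNReal RealInnerProductSpace

private lemma cross_integrable {n N : ℕ}
    (μ : Measure (Fin N → EuclideanSpace ℝ (Fin n))) [IsProbabilityMeasure μ]
    (φ : ℝ → ℝ) (hφ : Measurable φ)
    (hρfin : ∀ i j : Fin N, i ≠ j →
      Integrable (fun X : Fin N → EuclideanSpace ℝ (Fin n) =>
        (φ ‖X i - X j‖) ^ 2 * ‖X i - X j‖ ^ 2) μ)
    (i j k : Fin N) (hij : i ≠ j) (hik : i ≠ k) :
    Integrable (fun X : Fin N → EuclideanSpace ℝ (Fin n) =>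
      φ ‖X i - X j‖ * φ ‖X i - X k‖ * ⟪X j - X i, X k - X i⟫) μ := by
  have hmij : Measurable fun X : Fin N → EuclideanSpace ℝ (Fin n) => X i - X j :=
    (measurable_pi_apply i).sub (measurable_pi_apply j)
  have hmik : Measurable fun X : Fin N → EuclideanSpace ℝ (Fin n) => X i - X k :=
    (measurable_pi_apply i).sub (measurable_pi_apply k)
  have hmji : Measurable fun X : Fin N → EuclideanSpace ℝ (Fin n) => X j - X i :=
    (measurable_pi_apply j).sub (measurable_pi_apply i)
  have hmki : Measurable fun X : Fin N → EuclideanSpace ℝ (Fin n) => X k - X i :=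
    (measurable_pi_apply k).sub (measurable_pi_apply i)
  have hm : Measurable fun X : Fin N → EuclideanSpace ℝ (Fin n) =>
      φ ‖X i - X j‖ * φ ‖X i - X k‖ * ⟪X j - X i, X k - X i⟫ :=
    ((hφ.comp hmij.norm).mul (hφ.comp hmik.norm)).mul (hmji.inner hmki)
  have hbound : Integrable (fun X : Fin N → EuclideanSpace ℝ (Fin n) =>
      (2:ℝ)⁻¹ * ((φ ‖X i - X j‖) ^ 2 * ‖X i - X j‖ ^ 2
        + (φ ‖X i - X k‖) ^ 2 * ‖X i - X k‖ ^ 2)) μ :=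
    ((hρfin i j hij).add (hρfin i k hik)).const_mul _
  refine hbound.mono' hm.aestronglyMeasurable (Filter.Eventually.of_forall fun X => ?_)
  have h1 : |⟪X j - X i, X k - X i⟫| ≤ ‖X j - X i‖ * ‖X k - X i‖ := abs_real_inner_le_norm _ _
  rw [norm_sub_rev (X j), norm_sub_rev (X k)] at h1
  rw [Real.norm_eq_abs, abs_mul, abs_mul]
  have h2 : |φ ‖X i - X j‖| * ‖X i - X j‖ * (|φ ‖X i - X k‖| * ‖X i - X k‖) ≤
      (2:ℝ)⁻¹ * ((|φ ‖X i - X j‖| * ‖X i - X j‖) ^ 2 + (|φ ‖X i - X k‖| * ‖X i - X k‖) ^ 2) := by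
    nlinarith [sq_nonneg (|φ ‖X i - X j‖| * ‖X i - X j‖ - |φ ‖X i - X k‖| * ‖X i - X k‖)]
  have hnn1 : (0:ℝ) ≤ |φ ‖X i - X j‖| := abs_nonneg _
  have hnn2 : (0:ℝ) ≤ |φ ‖X i - X k‖| := abs_nonneg _
  have hnn3 : (0:ℝ) ≤ |⟪X j - X i, X k - X i⟫| := abs_nonneg _
  calc |φ ‖X i - X j‖| * |φ ‖X i - X k‖| * |⟪X j - X i, X k - X i⟫|
      ≤ |φ ‖X i - X j‖| * |φ ‖X i - X k‖| * (‖X i - X j‖ * ‖X i - X k‖) := by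
        exact mul_le_mul_of_nonneg_left h1 (by positivity)
    _ = |φ ‖X i - X j‖| * ‖X i - X j‖ * (|φ ‖X i - X k‖| * ‖X i - X k‖) := by ring
    _ ≤ (2:ℝ)⁻¹ * ((|φ ‖X i - X j‖| * ‖X i - X j‖) ^ 2 + (|φ ‖X i - X k‖| * ‖X i - X k‖) ^ 2) := h2
    _ = (2:ℝ)⁻¹ * ((φ ‖X i - X j‖) ^ 2 * ‖X i - X j‖ ^ 2
        + (φ ‖X i - X k‖) ^ 2 * ‖X i - X k‖ ^ 2) := by
        rw [mul_pow, mul_pow, sq_abs, sq_abs]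

private lemma field_expand {n N : ℕ} (φ : ℝ → ℝ)
    (X : Fin N → EuclideanSpace ℝ (Fin n)) (i : Fin N) :
    ‖interactionField n N φ X i‖ ^ 2 =
      ((N : ℝ) ^ 2)⁻¹ *
        ((∑ j ∈ Finset.univ.erase i, (φ ‖X i - X j‖) ^ 2 * ‖X i - X j‖ ^ 2) +
          ∑ j ∈ Finset.univ.erase i, ∑ k ∈ (Finset.univ.erase i).erase j,
            φ ‖X i - X j‖ * φ ‖X i - X k‖ * ⟪X j - X i, X k - X i⟫) := by
  have h2 : ‖∑ j ∈ Finset.univ.erase i, φ ‖X j - X i‖ • (X j - X i)‖ ^ 2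
      = ∑ j ∈ Finset.univ.erase i, ∑ k ∈ Finset.univ.erase i,
          φ ‖X i - X j‖ * φ ‖X i - X k‖ * ⟪X j - X i, X k - X i⟫ := by
    rw [← real_inner_self_eq_norm_sq, sum_inner]
    refine Finset.sum_congr rfl fun j hj => ?_
    rw [inner_sum]
    refine Finset.sum_congr rfl fun k hk => ?_
    rw [real_inner_smul_left, real_inner_smul_right, norm_sub_rev (X j), norm_sub_rev (X k)]
    ring
  have h3 : ∀ j ∈ Finset.univ.erase i,
      (∑ k ∈ Finset.univ.erase i,
          φ ‖X i - X j‖ * φ ‖X i - X k‖ * ⟪X j - X i, X k - X i⟫)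
      = (φ ‖X i - X j‖) ^ 2 * ‖X i - X j‖ ^ 2 +
        ∑ k ∈ (Finset.univ.erase i).erase j,
          φ ‖X i - X j‖ * φ ‖X i - X k‖ * ⟪X j - X i, X k - X i⟫ := by
    intro j hj
    rw [← Finset.add_sum_erase _ _ hj]
    congr 1
    rw [real_inner_self_eq_norm_sq, norm_sub_rev (X j)]
    ring
  rw [interactionField, norm_smul, mul_pow, norm_inv, Real.norm_natCast, ← inv_pow, h2,
    Finset.sum_congr rfl h3, Finset.sum_add_distrib]

/-- the expansion
`‖f_φ‖²_{L²(μ)} = ((N−1)/N²)‖φ‖²_{L²(ρ)} + (1/N³) ∑_{i≠j≠k} ∫ φφ⟨·,·⟩ dμ`,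
together with integrability of every cross term. -/
theorem interactionField_sq_norm_expansion
    (n N : ℕ) (hn : 1 ≤ n) (hN : 2 ≤ N)
    (μ : Measure (Fin N → EuclideanSpace ℝ (Fin n))) [IsProbabilityMeasure μ]
    (φ : ℝ → ℝ) (hφ : Measurable φ)
    (hρfin : ∀ i j : Fin N, i ≠ j →
      Integrable (fun X : Fin N → EuclideanSpace ℝ (Fin n) =>
        (φ ‖X i - X j‖) ^ 2 * ‖X i - X j‖ ^ 2) μ) :
    (∀ i j k : Fin N, i ≠ j → j ≠ k → i ≠ k →
      Integrable (fun X : Fin N → EuclideanSpace ℝ (Fin n) =>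
        φ ‖X i - X j‖ * φ ‖X i - X k‖ * ⟪X j - X i, X k - X i⟫) μ) ∧
    ∫ X, (N : ℝ)⁻¹ * ∑ i : Fin N, ‖interactionField n N φ X i‖ ^ 2 ∂μ =
      (((N : ℝ) - 1) / (N : ℝ) ^ 2) *
        ((↑N * ((N : ℝ) - 1))⁻¹ *
          ∑ i : Fin N, ∑ j ∈ Finset.univ.erase i,
            ∫ X, (φ ‖X i - X j‖) ^ 2 * ‖X i - X j‖ ^ 2 ∂μ) +
      ((N : ℝ) ^ 3)⁻¹ *
        ∑ i : Fin N, ∑ j ∈ Finset.univ.erase i, ∑ k ∈ (Finset.univ.erase i).erase j,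
          ∫ X, φ ‖X i - X j‖ * φ ‖X i - X k‖ * ⟪X j - X i, X k - X i⟫ ∂μ := by
  have hN0 : (N : ℝ) ≠ 0 := by
    have : (0:ℕ) < N := by omega
    exact_mod_cast this.ne'
  have hN1 : (N : ℝ) - 1 ≠ 0 := by
    have : (2:ℝ) ≤ (N:ℝ) := by exact_mod_cast hN
    linarith
  refine ⟨fun i j k hij hjk hik => cross_integrable μ φ hφ hρfin i j k hij hik, ?_⟩
  -- integrability of pieces
  have hDint : ∀ i : Fin N, ∀ j ∈ Finset.univ.erase i,
      Integrable (fun X : Fin N → EuclideanSpace ℝ (Fin n) =>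
        (φ ‖X i - X j‖) ^ 2 * ‖X i - X j‖ ^ 2) μ :=
    fun i j hj => hρfin i j (Finset.ne_of_mem_erase hj).symm
  have hCint : ∀ i : Fin N, ∀ j ∈ Finset.univ.erase i, ∀ k ∈ (Finset.univ.erase i).erase j,
      Integrable (fun X : Fin N → EuclideanSpace ℝ (Fin n) =>
        φ ‖X i - X j‖ * φ ‖X i - X k‖ * ⟪X j - X i, X k - X i⟫) μ :=
    fun i j hj k hk => cross_integrable μ φ hφ hρfin i j k
      (Finset.ne_of_mem_erase hj).symm
      (Finset.ne_of_mem_erase (Finset.mem_of_mem_erase hk)).symm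
  set D : (Fin N → EuclideanSpace ℝ (Fin n)) → ℝ := fun X =>
    ∑ i : Fin N, ∑ j ∈ Finset.univ.erase i, (φ ‖X i - X j‖) ^ 2 * ‖X i - X j‖ ^ 2 with hD
  set C : (Fin N → EuclideanSpace ℝ (Fin n)) → ℝ := fun X =>
    ∑ i : Fin N, ∑ j ∈ Finset.univ.erase i, ∑ k ∈ (Finset.univ.erase i).erase j,
      φ ‖X i - X j‖ * φ ‖X i - X k‖ * ⟪X j - X i, X k - X i⟫ with hC
  have hDI : Integrable D μ :=
    integrable_finset_sum _ fun i _ => integrable_finset_sum _ fun j hj => hDint i j hj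
  have hCI : Integrable C μ :=
    integrable_finset_sum _ fun i _ => integrable_finset_sum _ fun j hj =>
      integrable_finset_sum _ fun k hk => hCint i j hj k hk
  have key : ∀ X : Fin N → EuclideanSpace ℝ (Fin n),
      (N : ℝ)⁻¹ * ∑ i : Fin N, ‖interactionField n N φ X i‖ ^ 2 =
      ((N : ℝ) ^ 3)⁻¹ * (D X + C X) := by
    intro X
    simp only [field_expand φ X, hD, hC]
    rw [← Finset.mul_sum, Finset.sum_add_distrib, ← mul_assoc, ← mul_inv]
    ring_nf
  calc ∫ X, (N : ℝ)⁻¹ * ∑ i : Fin N, ‖interactionField n N φ X i‖ ^ 2 ∂μ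
      = ∫ X, ((N : ℝ) ^ 3)⁻¹ * (D X + C X) ∂μ := by
        exact integral_congr_ae (Filter.Eventually.of_forall key)
    _ = ((N : ℝ) ^ 3)⁻¹ * (∫ X, D X ∂μ + ∫ X, C X ∂μ) := by
        rw [integral_const_mul, integral_add hDI hCI]
    _ = ((N : ℝ) ^ 3)⁻¹ * (∑ i : Fin N, ∑ j ∈ Finset.univ.erase i,
            ∫ X, (φ ‖X i - X j‖) ^ 2 * ‖X i - X j‖ ^ 2 ∂μ)
        + ((N : ℝ) ^ 3)⁻¹ * (∑ i : Fin N, ∑ j ∈ Finset.univ.erase i,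
            ∑ k ∈ (Finset.univ.erase i).erase j,
            ∫ X, φ ‖X i - X j‖ * φ ‖X i - X k‖ * ⟪X j - X i, X k - X i⟫ ∂μ) := by
        rw [mul_add]
        congr 1
        · congr 1
          rw [hD, integral_finset_sum _ fun i _ =>
            integrable_finset_sum _ fun j hj => hDint i j hj]
          refine Finset.sum_congr rfl fun i _ => ?_
          rw [integral_finset_sum _ fun j hj => hDint i j hj]
        · congr 1
          rw [hC, integral_finset_sum _ fun i _ => integrable_finset_sum _ fun j hj =>
            integrable_finset_sum _ fun k hk => hCint i j hj k hk]
          refine Finset.sum_congr rfl fun i _ => ?_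
          rw [integral_finset_sum _ fun j hj =>
            integrable_finset_sum _ fun k hk => hCint i j hj k hk]
          refine Finset.sum_congr rfl fun j hj => ?_
          rw [integral_finset_sum _ fun k hk => hCint i j hj k hk]
    _ = _ := by
        congr 1
        have : ((N : ℝ) - 1) / (N : ℝ) ^ 2 * ((N : ℝ) * ((N : ℝ) - 1))⁻¹
            = ((N : ℝ) ^ 3)⁻¹ := by
          field_simp
        rw [← mul_assoc, this]
end

section
/- Fix integers n ≥ 1 and N ≥ 2. Let μ₀ be a Borel probability measure on ℝ^n absolutely continuous with respect to the Lebesgue measure, and let μ := μ₀^{⊗N} on (ℝ^n)^N. Then for every measurable φ : [0,∞) → ℝ with ‖φ‖²_{L²(ρ)} := (1/(N(N−1))) Σ_{i ≠ j} ∫ φ(‖x_i − x_j‖)² ‖x_i − x_j‖² dμ(X) < ∞, one has ‖f_φ‖²_{L²(μ)} ≥ ((N−1)/N²) ‖φ‖²_{L²(ρ)}, i.e. ‖f_φ‖_{L²(μ)} ≥ (√(N−1)/N) ‖φ‖_{L²(ρ)}. -/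
open MeasureTheory Finset
open scoped ENNReal

/-!
Write `N f_φ(X)_i = ∑_{j ≠ i} A(x_i, x_j)` with `A(x, y) = φ(‖y − x‖)(y − x)`. Expanding the
square, `E‖∑_{j ≠ i} A(x_i, x_j)‖²` is the sum of the `N − 1` diagonal terms, each equal to
`∫ ‖A‖² d(μ₀ ⊗ μ₀)`, and of the cross terms `E⟨A(x_i, x_j), A(x_i, x_k)⟩` with `i, j, k`
distinct. By independence a cross term equals `∫ ‖∫ A(x, y) dμ₀(y)‖² dμ₀(x) ≥ 0`, so dropping
the cross terms and summing over `i` gives the bound.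
-/

open ProbabilityTheory
open scoped RealInnerProductSpace

lemma MeasureTheory.MeasurePreserving.integral_comp_of_aestronglyMeasurable
    {α β G : Type*} [MeasurableSpace α] [MeasurableSpace β] [NormedAddCommGroup G]
    [NormedSpace ℝ G] {μ : Measure α} {ν : Measure β} {f : α → β} (hf : MeasurePreserving f μ ν)
    {g : β → G} (hg : AEStronglyMeasurable g ν) : ∫ x, g (f x) ∂μ = ∫ y, g y ∂ν := by
  rw [← hf.map_eq] at hg ⊢
  exact (integral_map hf.aemeasurable hg).symm

lemma MeasureTheory.memLp_two_of_lintegral_ofReal_norm_sq_ne_top {α E : Type*}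
    [MeasurableSpace α] [NormedAddCommGroup E] {μ : Measure α} {f : α → E}
    (hf : AEStronglyMeasurable f μ) (h : ∫⁻ x, ENNReal.ofReal (‖f x‖ ^ 2) ∂μ ≠ ⊤) :
    MemLp f 2 μ :=
  (memLp_two_iff_integrable_sq_norm hf).2
    ⟨hf.norm.pow 2, (hasFiniteIntegral_iff_ofReal (ae_of_all _ fun _ => sq_nonneg _)).2 h.lt_top⟩

lemma MeasureTheory.MemLp.ae_integrable_prodMk_left {α β E : Type*} [MeasurableSpace α]
    [MeasurableSpace β] [NormedAddCommGroup E] {μ : Measure α} {ν : Measure β} [SFinite μ]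
    [IsFiniteMeasure ν] {f : α × β → E} (hf : MemLp f 2 (μ.prod ν)) :
    ∀ᵐ x ∂μ, Integrable (fun y => f (x, y)) ν := by
  filter_upwards [hf.1.prodMk_left, (hf.integrable_norm_pow two_ne_zero).prod_right_ae]
    with x hmeas hsq
  exact ((memLp_two_iff_integrable_sq_norm hmeas).2 hsq).integrable one_le_two

section InnerSections

variable {β H : Type*} [MeasurableSpace β] {ν : Measure β}
  [NormedAddCommGroup H] [InnerProductSpace ℝ H]

lemma MeasureTheory.MemLp.integrable_inner {f g : β → H} (hf : MemLp f 2 ν)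
    (hg : MemLp g 2 ν) : Integrable (fun x => ⟪f x, g x⟫) ν :=
  (hf.norm.integrable_mul hg.norm).mono (hf.1.inner hg.1) <|
    ae_of_all _ fun x => by simpa using abs_real_inner_le_norm (f x) (g x)

lemma integral_inner_prod_eq_norm_integral_sq [CompleteSpace H] [SFinite ν] {a : β → H}
    (ha : Integrable a ν) : ∫ p, ⟪a p.1, a p.2⟫ ∂(ν.prod ν) = ‖∫ y, a y ∂ν‖ ^ 2 := by
  have hint : Integrable (fun p : β × β => ⟪a p.1, a p.2⟫) (ν.prod ν) :=
    (ha.norm.mul_prod ha.norm).mono (ha.1.comp_fst.inner ha.1.comp_snd) <|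
      ae_of_all _ fun p => by simpa using abs_real_inner_le_norm (a p.1) (a p.2)
  rw [integral_prod _ hint, ← real_inner_self_eq_norm_sq]
  simp_rw [integral_inner ha]
  simpa only [real_inner_comm] using integral_inner (𝕜 := ℝ) ha (∫ y, a y ∂ν)

variable [IsProbabilityMeasure ν] {A : β × β → H}

lemma integrable_inner_sections (hA : MemLp A 2 (ν.prod ν)) :
    Integrable (fun q : β × β × β => ⟪A (q.1, q.2.1), A (q.1, q.2.2)⟫) (ν.prod (ν.prod ν)) :=
  (hA.comp_measurePreserving ((MeasurePreserving.id ν).prod measurePreserving_fst)).integrable_inner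
    (hA.comp_measurePreserving ((MeasurePreserving.id ν).prod measurePreserving_snd))

lemma integral_inner_sections_nonneg [CompleteSpace H] (hA : MemLp A 2 (ν.prod ν)) :
    0 ≤ ∫ q : β × β × β, ⟪A (q.1, q.2.1), A (q.1, q.2.2)⟫ ∂(ν.prod (ν.prod ν)) := by
  rw [integral_prod _ (integrable_inner_sections hA)]
  refine integral_nonneg_of_ae ?_
  filter_upwards [hA.ae_integrable_prodMk_left] with x hx
  rw [integral_inner_prod_eq_norm_integral_sq hx]
  positivity

end InnerSections

section Marginals

variable {ι α : Type*} [Fintype ι] [MeasurableSpace α] (μ₀ : Measure α) [IsProbabilityMeasure μ₀]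

lemma iIndepFun_pi_eval : iIndepFun (fun i (X : ι → α) => X i) (Measure.pi fun _ => μ₀) :=
  iIndepFun_pi (X := fun _ => id) fun _ => aemeasurable_id

lemma measurePreserving_pi_eval_pair {i j : ι} (hij : i ≠ j) :
    MeasurePreserving (fun X : ι → α => (X i, X j)) (Measure.pi fun _ => μ₀) (μ₀.prod μ₀) := by
  refine ⟨by fun_prop, ?_⟩
  rw [((iIndepFun_pi_eval μ₀).indepFun hij).map_prod_eq_prod_map_map
      (measurable_pi_apply i).aemeasurable (measurable_pi_apply j).aemeasurable,
    (measurePreserving_eval _ i).map_eq, (measurePreserving_eval _ j).map_eq]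

lemma measurePreserving_pi_eval_triple {i j k : ι} (hij : i ≠ j) (hik : i ≠ k) (hjk : j ≠ k) :
    MeasurePreserving (fun X : ι → α => (X i, X j, X k)) (Measure.pi fun _ => μ₀)
      (μ₀.prod (μ₀.prod μ₀)) := by
  refine ⟨by fun_prop, ?_⟩
  rw [((iIndepFun_pi_eval μ₀).indepFun_prodMk (fun _ => measurable_pi_apply _) j k i
      hij.symm hik.symm).symm.map_prod_eq_prod_map_map
      (measurable_pi_apply i).aemeasurable (by fun_prop),
    (measurePreserving_eval _ i).map_eq, (measurePreserving_pi_eval_pair μ₀ hjk).map_eq]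

end Marginals

section PairSums

variable {ι α H : Type*} [Fintype ι] [MeasurableSpace α] {μ₀ : Measure α}
  [IsProbabilityMeasure μ₀] [NormedAddCommGroup H] {A : α × α → H} {i : ι} {s : Finset ι}

lemma memLp_sum_pi_eval_pair (hA : MemLp A 2 (μ₀.prod μ₀)) (hi : i ∉ s) :
    MemLp (fun X : ι → α => ∑ j ∈ s, A (X i, X j)) 2 (Measure.pi fun _ => μ₀) :=
  memLp_finsetSum _ fun _ hj =>
    hA.comp_measurePreserving (measurePreserving_pi_eval_pair μ₀ fun h => hi (h ▸ hj))

lemma integral_inner_pi_eval_nonneg [InnerProductSpace ℝ H] [CompleteSpace H]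
    (hA : MemLp A 2 (μ₀.prod μ₀)) {j k : ι} (hij : i ≠ j) (hik : i ≠ k) (hjk : j ≠ k) :
    0 ≤ ∫ X, ⟪A (X i, X j), A (X i, X k)⟫ ∂(Measure.pi fun _ => μ₀) := by
  rw [(measurePreserving_pi_eval_triple μ₀ hij hik hjk).integral_comp_of_aestronglyMeasurable
    (integrable_inner_sections hA).1]
  exact integral_inner_sections_nonneg hA

lemma card_mul_integral_norm_sq_le_integral_norm_sum_sq [InnerProductSpace ℝ H] [CompleteSpace H]
    (hA : MemLp A 2 (μ₀.prod μ₀)) (hi : i ∉ s) :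
    #s * ∫ p, ‖A p‖ ^ 2 ∂(μ₀.prod μ₀) ≤
      ∫ X, ‖∑ j ∈ s, A (X i, X j)‖ ^ 2 ∂(Measure.pi fun _ => μ₀) := by
  have hne : ∀ j ∈ s, i ≠ j := fun j hj h => hi (h ▸ hj)
  have hmem : ∀ j ∈ s, MemLp (fun X : ι → α => A (X i, X j)) 2 (Measure.pi fun _ => μ₀) :=
    fun j hj => hA.comp_measurePreserving (measurePreserving_pi_eval_pair μ₀ (hne j hj))
  have hdiag : ∀ j ∈ s, ∫ X, ⟪A (X i, X j), A (X i, X j)⟫ ∂(Measure.pi fun _ => μ₀) =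
      ∫ p, ‖A p‖ ^ 2 ∂(μ₀.prod μ₀) := fun j hj => by
    simp_rw [real_inner_self_eq_norm_sq]
    exact (measurePreserving_pi_eval_pair μ₀ (hne j hj)).integral_comp_of_aestronglyMeasurable
      (hA.1.norm.pow 2)
  calc #s * ∫ p, ‖A p‖ ^ 2 ∂(μ₀.prod μ₀)
      = ∑ j ∈ s, ∫ X, ⟪A (X i, X j), A (X i, X j)⟫ ∂(Measure.pi fun _ => μ₀) := by
        rw [sum_congr rfl hdiag, sum_const, nsmul_eq_mul]
    _ ≤ ∑ j ∈ s, ∑ k ∈ s, ∫ X, ⟪A (X i, X j), A (X i, X k)⟫ ∂(Measure.pi fun _ => μ₀) := by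
        refine sum_le_sum fun j hj => single_le_sum (f := fun k =>
          ∫ X, ⟪A (X i, X j), A (X i, X k)⟫ ∂(Measure.pi fun _ => μ₀)) (fun k hk => ?_) hj
        rcases eq_or_ne j k with rfl | hjk
        · rw [hdiag j hj]
          positivity
        · exact integral_inner_pi_eval_nonneg hA (hne j hj) (hne k hk) hjk
    _ = ∫ X, ‖∑ j ∈ s, A (X i, X j)‖ ^ 2 ∂(Measure.pi fun _ => μ₀) := by
        have hint : ∀ j ∈ s, ∀ k ∈ s, Integrable (fun X : ι → α => ⟪A (X i, X j), A (X i, X k)⟫)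
            (Measure.pi fun _ => μ₀) := fun j hj k hk => (hmem j hj).integrable_inner (hmem k hk)
        simp_rw [← real_inner_self_eq_norm_sq, sum_inner, inner_sum]
        rw [integral_finsetSum _ fun j hj => integrable_finsetSum _ (hint j hj)]
        exact sum_congr rfl fun j hj => (integral_finsetSum _ (hint j hj)).symm

end PairSums

section PairForce

variable {E : Type*} [NormedAddCommGroup E] [NormedSpace ℝ E]

noncomputable def pairForce (φ : ℝ → ℝ) (p : E × E) : E := φ ‖p.2 - p.1‖ • (p.2 - p.1)

lemma norm_pairForce_sq (φ : ℝ → ℝ) (x y : E) :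
    ‖pairForce φ (x, y)‖ ^ 2 = φ ‖x - y‖ ^ 2 * ‖x - y‖ ^ 2 := by
  rw [pairForce, norm_smul, Real.norm_eq_abs, mul_pow, sq_abs, norm_sub_rev]

variable [MeasurableSpace E] [BorelSpace E] [SecondCountableTopology E] {φ : ℝ → ℝ}

lemma measurable_pairForce (hφ : Measurable φ) : Measurable (pairForce (E := E) φ) := by
  unfold pairForce
  fun_prop

lemma lintegral_pi_eval_pair_eq_lintegral_pairForce {ι : Type*} [Fintype ι] (μ₀ : Measure E)
    [IsProbabilityMeasure μ₀] (hφ : Measurable φ) {i j : ι} (hij : i ≠ j) :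
    ∫⁻ X, ENNReal.ofReal (φ ‖X i - X j‖ ^ 2 * ‖X i - X j‖ ^ 2) ∂(Measure.pi fun _ => μ₀) =
      ∫⁻ p, ENNReal.ofReal (‖pairForce φ p‖ ^ 2) ∂(μ₀.prod μ₀) := by
  simp_rw [← norm_pairForce_sq]
  exact (measurePreserving_pi_eval_pair μ₀ hij).lintegral_comp
    ((measurable_pairForce hφ).norm.pow_const 2).ennreal_ofReal

end PairForce

section InteractionField

variable {n N : ℕ} {φ : ℝ → ℝ} {μ₀ : Measure (EuclideanSpace ℝ (Fin n))}
  [IsProbabilityMeasure μ₀]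

lemma mean_norm_sq_interactionField (X : Fin N → EuclideanSpace ℝ (Fin n)) :
    (N : ℝ)⁻¹ * ∑ i, ‖interactionField n N φ X i‖ ^ 2 =
      (N : ℝ)⁻¹ ^ 3 * ∑ i, ‖∑ j ∈ univ.erase i, pairForce φ (X i, X j)‖ ^ 2 := by
  simp_rw [interactionField, pairForce, norm_smul, mul_pow, ← mul_sum, Real.norm_eq_abs, sq_abs]
  ring

lemma integrable_mean_norm_sq_interactionField (hA : MemLp (pairForce φ) 2 (μ₀.prod μ₀)) :
    Integrable (fun X => (N : ℝ)⁻¹ * ∑ i, ‖interactionField n N φ X i‖ ^ 2)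
      (Measure.pi fun _ => μ₀) := by
  simp_rw [mean_norm_sq_interactionField]
  exact (integrable_finsetSum _ fun i _ =>
    (memLp_sum_pi_eval_pair hA (notMem_erase i univ)).integrable_norm_pow two_ne_zero).const_mul _

lemma mul_integral_le_integral_mean_norm_sq_interactionField
    (hA : MemLp (pairForce φ) 2 (μ₀.prod μ₀)) :
    ((N - 1 : ℕ) : ℝ) / N ^ 2 * ∫ p, ‖pairForce φ p‖ ^ 2 ∂(μ₀.prod μ₀) ≤
      ∫ X, (N : ℝ)⁻¹ * ∑ i, ‖interactionField n N φ X i‖ ^ 2 ∂(Measure.pi fun _ => μ₀) := by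
  simp_rw [mean_norm_sq_interactionField]
  rw [integral_const_mul, integral_finsetSum _ fun i _ =>
    (memLp_sum_pi_eval_pair hA (notMem_erase i univ)).integrable_norm_pow two_ne_zero]
  calc ((N - 1 : ℕ) : ℝ) / N ^ 2 * ∫ p, ‖pairForce φ p‖ ^ 2 ∂(μ₀.prod μ₀)
      = (N : ℝ)⁻¹ ^ 3 *
          ∑ i : Fin N, #(univ.erase i) * ∫ p, ‖pairForce φ p‖ ^ 2 ∂(μ₀.prod μ₀) := by
        obtain rfl | hN := N.eq_zero_or_pos
        · simp
        simp only [card_erase_of_mem (mem_univ _), card_univ, Fintype.card_fin, sum_const,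
          nsmul_eq_mul]
        field_simp
    _ ≤ _ := by
        gcongr with i
        exact card_mul_integral_norm_sq_le_integral_norm_sum_sq hA (notMem_erase i univ)

end InteractionField

theorem interactionField_coercivity_iid_general
    (n N : ℕ)
    (μ₀ : Measure (EuclideanSpace ℝ (Fin n))) [IsProbabilityMeasure μ₀]
    (μ : Measure (Fin N → EuclideanSpace ℝ (Fin n)))
    (hμ : μ = Measure.pi fun _ : Fin N => μ₀)
    (φ : ℝ → ℝ) (hφ : Measurable φ)
    (hρfin : ((N * (N - 1) : ℕ) : ℝ≥0∞)⁻¹ *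
        ∑ i : Fin N, ∑ j ∈ Finset.univ.erase i,
          ∫⁻ X, ENNReal.ofReal ((φ ‖X i - X j‖) ^ 2 * ‖X i - X j‖ ^ 2) ∂μ ≠ ⊤) :
    ∫⁻ X, ENNReal.ofReal ((N : ℝ)⁻¹ * ∑ i : Fin N, ‖interactionField n N φ X i‖ ^ 2) ∂μ ≥
      (((N - 1 : ℕ) : ℝ≥0∞) / ((N : ℝ≥0∞) ^ 2)) *
        (((N * (N - 1) : ℕ) : ℝ≥0∞)⁻¹ *
          ∑ i : Fin N, ∑ j ∈ Finset.univ.erase i,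
            ∫⁻ X, ENNReal.ofReal ((φ ‖X i - X j‖) ^ 2 * ‖X i - X j‖ ^ 2) ∂μ) := by
  subst hμ
  obtain hN | hN := lt_or_ge N 2
  · simp [Nat.sub_eq_zero_of_le (Nat.le_of_lt_succ hN)]
  have hcard : ((N * (N - 1) : ℕ) : ℝ≥0∞) ≠ 0 :=
    Nat.cast_ne_zero.2 (Nat.mul_pos (by omega) (by omega)).ne'
  simp only [sum_congr rfl fun i _ => sum_congr rfl fun j hj =>
      lintegral_pi_eval_pair_eq_lintegral_pairForce μ₀ hφ (ne_of_mem_erase hj).symm,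
    sum_const, card_erase_of_mem (mem_univ _), card_univ, Fintype.card_fin, nsmul_eq_mul,
    ← mul_assoc, ← Nat.cast_mul, ENNReal.inv_mul_cancel_left hcard (ENNReal.natCast_ne_top _)]
    at hρfin ⊢
  have hA : MemLp (pairForce φ) 2 (μ₀.prod μ₀) :=
    memLp_two_of_lintegral_ofReal_norm_sq_ne_top
      (measurable_pairForce hφ).aestronglyMeasurable hρfin
  rw [← ofReal_integral_eq_lintegral_ofReal (hA.integrable_norm_pow two_ne_zero)
      (ae_of_all _ fun _ => sq_nonneg _),
    ← ofReal_integral_eq_lintegral_ofReal (integrable_mean_norm_sq_interactionField hA)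
      (ae_of_all _ fun _ => by positivity),
    ← ENNReal.ofReal_natCast, ← ENNReal.ofReal_natCast N, ← ENNReal.ofReal_pow (Nat.cast_nonneg N),
    ← ENNReal.ofReal_div_of_pos (by positivity), ← ENNReal.ofReal_mul (by positivity)]
  exact ENNReal.ofReal_le_ofReal (mul_integral_le_integral_mean_norm_sq_interactionField hA)

/-- coercivity `‖f_φ‖²_{L²(μ)} ≥ ((N−1)/N²) ‖φ‖²_{L²(ρ)}` when `μ = μ₀^{⊗N}`
is the law of `N` i.i.d. particles with `μ₀` absolutely continuous. -/
theorem interactionField_coercivity_iid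
    (n N : ℕ) (hn : 1 ≤ n) (hN : 2 ≤ N)
    (μ₀ : Measure (EuclideanSpace ℝ (Fin n))) [IsProbabilityMeasure μ₀]
    (hμ₀ : μ₀ ≪ volume)
    (μ : Measure (Fin N → EuclideanSpace ℝ (Fin n)))
    (hμ : μ = Measure.pi fun _ : Fin N => μ₀)
    (φ : ℝ → ℝ) (hφ : Measurable φ)
    (hρfin : ((N * (N - 1) : ℕ) : ℝ≥0∞)⁻¹ *
        ∑ i : Fin N, ∑ j ∈ Finset.univ.erase i,
          ∫⁻ X, ENNReal.ofReal ((φ ‖X i - X j‖) ^ 2 * ‖X i - X j‖ ^ 2) ∂μ ≠ ⊤) :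
    ∫⁻ X, ENNReal.ofReal ((N : ℝ)⁻¹ * ∑ i : Fin N, ‖interactionField n N φ X i‖ ^ 2) ∂μ ≥
      (((N - 1 : ℕ) : ℝ≥0∞) / ((N : ℝ≥0∞) ^ 2)) *
        (((N * (N - 1) : ℕ) : ℝ≥0∞)⁻¹ *
          ∑ i : Fin N, ∑ j ∈ Finset.univ.erase i,
            ∫⁻ X, ENNReal.ofReal ((φ ‖X i - X j‖) ^ 2 * ‖X i - X j‖ ^ 2) ∂μ) :=
  interactionField_coercivity_iid_general n N μ₀ μ hμ φ hφ hρfin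
end

section
/- Fix n ≥ 1 and let σ be the uniform (normalized surface) probability measure on the unit sphere 𝕊^n ⊂ ℝ^{n+1}. Let φ : [0,π] → ℝ be measurable with ∫∫ φ(d(x,y))² d(x,y)² dσ(y) dσ(x) < ∞. Then ∫∫∫ φ(d(x,y)) φ(d(x,z)) ⟨w(x,y), w(x,z)⟩ dσ(x) dσ(y) dσ(z) = 0. -/
open MeasureTheory Finset
open scoped ENNReal RealInnerProductSpace

/-- Geodesic distance on the unit sphere: `d(x,y) = arccos⟨x,y⟩`. -/
noncomputable def sphereDist {n : ℕ} (x y : EuclideanSpace ℝ (Fin (n + 1))) : ℝ :=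
  Real.arccos ⟪x, y⟫

open Classical in
/-- The influence vector on the unit sphere:
`w(x,y) = d(x,y)·(y − ⟨x,y⟩x)/‖y − ⟨x,y⟩x‖` if `y ≠ ±x`, and `0` otherwise. -/
noncomputable def sphereW {n : ℕ} (x y : EuclideanSpace ℝ (Fin (n + 1))) :
    EuclideanSpace ℝ (Fin (n + 1)) :=
  if y = x ∨ y = -x then 0
  else sphereDist x y • (‖y - ⟪x, y⟫ • x‖⁻¹ • (y - ⟪x, y⟫ • x))

/-!
Fix `x` on the sphere and let `ρ` be the reflection of `ℝ^{n+1}` in the line `ℝx`. It preserves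
`σ`, fixes `⟨x, ·⟩` and hence `d(x, ·)`, and reverses the tangent vector `y − ⟨x,y⟩x`, so
`F z := φ(d(x,z)) w(x,z)` satisfies `F ∘ ρ = −F`. Applying `ρ` in the `y`-variable alone
negates `⟨F y, F z⟩` while preserving `σ ⊗ σ`, so the inner double integral vanishes for every
`x` on the sphere, and Fubini gives the claim. If the triple integrand is not integrable, the
integral is `0` by convention.
-/

section Odd

variable {α E : Type*} [MeasurableSpace α] {μ : Measure α}

theorem MeasureTheory.MeasurePreserving.integral_eq_zero_of_comp_eq_neg
    [NormedAddCommGroup E] [NormedSpace ℝ E] {f : α → α} (hf : MeasurePreserving f μ μ)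
    (hfe : MeasurableEmbedding f) {g : α → E} (hg : ∀ x, g (f x) = -g x) :
    ∫ x, g x ∂μ = 0 := by
  have : IsAddTorsionFree E := .of_isTorsionFree ℝ E
  simp_rw [← self_eq_neg, ← integral_neg, ← hg, hf.integral_comp hfe]

theorem MeasureTheory.MeasurePreserving.integral_inner_prod_eq_zero_of_comp_eq_neg
    [NormedAddCommGroup E] [InnerProductSpace ℝ E] [SFinite μ] {f : α → α}
    (hf : MeasurePreserving f μ μ) (hfe : MeasurableEmbedding f) {g : α → E}
    (hg : ∀ x, g (f x) = -g x) :
    ∫ p : α × α, ⟪g p.1, g p.2⟫ ∂μ.prod μ = 0 :=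
  (hf.prod (.id μ)).integral_eq_zero_of_comp_eq_neg (hfe.prodMap .id)
    fun p => by simp [hg, inner_neg_left]

end Odd

section Reflection

variable {𝕜 E : Type*} [RCLike 𝕜] [NormedAddCommGroup E] [InnerProductSpace 𝕜 E]
  {K : Submodule 𝕜 E} [K.HasOrthogonalProjection] {v w : E}

theorem Submodule.inner_reflection_right_of_mem (hw : w ∈ K) :
    inner 𝕜 w (K.reflection v) = inner 𝕜 w v := by
  rw [← K.reflection.inner_map_map w v, reflection_mem_subspace_eq_self hw]

theorem Submodule.reflection_eq_iff_of_mem (hw : w ∈ K) : K.reflection v = w ↔ v = w := by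
  conv_lhs => rw [← reflection_mem_subspace_eq_self hw]
  exact K.reflection.injective.eq_iff

end Reflection

section Sphere

variable {n : ℕ}

theorem inner_reflection_singleton_right (x y : EuclideanSpace ℝ (Fin (n + 1))) :
    ⟪x, (ℝ ∙ x).reflection y⟫ = ⟪x, y⟫ :=
  Submodule.inner_reflection_right_of_mem (Submodule.mem_span_singleton_self x)

theorem sphereDist_reflection_singleton (x y : EuclideanSpace ℝ (Fin (n + 1))) :
    sphereDist x ((ℝ ∙ x).reflection y) = sphereDist x y := by
  rw [sphereDist, inner_reflection_singleton_right, sphereDist]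

theorem sphereW_reflection_singleton {x : EuclideanSpace ℝ (Fin (n + 1))} (hx : ‖x‖ = 1)
    (y : EuclideanSpace ℝ (Fin (n + 1))) :
    sphereW x ((ℝ ∙ x).reflection y) = -sphereW x y := by
  have hx_mem : x ∈ ℝ ∙ x := Submodule.mem_span_singleton_self x
  have hpole :
      ((ℝ ∙ x).reflection y = x ∨ (ℝ ∙ x).reflection y = -x) ↔ (y = x ∨ y = -x) := by
    rw [Submodule.reflection_eq_iff_of_mem hx_mem,
      Submodule.reflection_eq_iff_of_mem (Submodule.neg_mem _ hx_mem)]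
  have htangent : (ℝ ∙ x).reflection y - ⟪x, y⟫ • x = -(y - ⟪x, y⟫ • x) := by
    rw [Submodule.reflection_singleton_apply, hx]
    module
  unfold sphereW
  simp only [hpole, sphereDist_reflection_singleton, inner_reflection_singleton_right, htangent,
    norm_neg, smul_neg]
  split_ifs <;> simp

end Sphere

theorem sphere_crossTerm_zero_general
    (n : ℕ)
    (σ : Measure (EuclideanSpace ℝ (Fin (n + 1)))) [IsProbabilityMeasure σ]
    (hσsphere : σ (Metric.sphere (0 : EuclideanSpace ℝ (Fin (n + 1))) 1)ᶜ = 0)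
    (hσinv : ∀ O : EuclideanSpace ℝ (Fin (n + 1)) ≃ₗᵢ[ℝ] EuclideanSpace ℝ (Fin (n + 1)),
      Measure.map O σ = σ)
    (φ : ℝ → ℝ) :
    ∫ p : EuclideanSpace ℝ (Fin (n + 1)) ×
        (EuclideanSpace ℝ (Fin (n + 1)) × EuclideanSpace ℝ (Fin (n + 1))),
      φ (sphereDist p.1 p.2.1) * φ (sphereDist p.1 p.2.2) *
        ⟪sphereW p.1 p.2.1, sphereW p.1 p.2.2⟫ ∂(σ.prod (σ.prod σ)) = 0 := by
  refine (em (Integrable _ (σ.prod (σ.prod σ)))).elim (fun hint => ?_) integral_undef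
  rw [integral_prod _ hint]
  refine integral_eq_zero_of_ae ?_
  filter_upwards [mem_ae_iff.mpr hσsphere] with x hx
  rw [mem_sphere_zero_iff_norm] at hx
  rw [Pi.zero_apply]
  set ρ := (ℝ ∙ x).reflection
  have hρ : MeasurePreserving ρ σ σ := ⟨ρ.continuous.measurable, hσinv ρ⟩
  have hodd (z) :
      φ (sphereDist x (ρ z)) • sphereW x (ρ z) = -(φ (sphereDist x z) • sphereW x z) := by
    rw [sphereDist_reflection_singleton, sphereW_reflection_singleton hx, smul_neg]
  have hcross := hρ.integral_inner_prod_eq_zero_of_comp_eq_neg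
    ρ.toHomeomorph.measurableEmbedding (g := fun z => φ (sphereDist x z) • sphereW x z) hodd
  simp only [real_inner_smul_left, real_inner_smul_right] at hcross
  convert hcross using 3
  ring

/-- the cross term vanishes for particles uniformly distributed on the
sphere: `∫∫∫ φ(d(x,y))φ(d(x,z))⟨w(x,y),w(x,z)⟩ dσ(x)dσ(y)dσ(z) = 0`. -/
theorem sphere_crossTerm_zero
    (n : ℕ) (hn : 1 ≤ n)
    (σ : Measure (EuclideanSpace ℝ (Fin (n + 1)))) [IsProbabilityMeasure σ]
    (hσsphere : σ (Metric.sphere (0 : EuclideanSpace ℝ (Fin (n + 1))) 1)ᶜ = 0)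
    (hσinv : ∀ O : EuclideanSpace ℝ (Fin (n + 1)) ≃ₗᵢ[ℝ] EuclideanSpace ℝ (Fin (n + 1)),
      Measure.map O σ = σ)
    (φ : ℝ → ℝ) (hφ : Measurable φ)
    (hint : Integrable (fun p : EuclideanSpace ℝ (Fin (n + 1)) ×
        EuclideanSpace ℝ (Fin (n + 1)) =>
      (φ (sphereDist p.1 p.2)) ^ 2 * (sphereDist p.1 p.2) ^ 2) (σ.prod σ)) :
    ∫ p : EuclideanSpace ℝ (Fin (n + 1)) ×
        (EuclideanSpace ℝ (Fin (n + 1)) × EuclideanSpace ℝ (Fin (n + 1))),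
      φ (sphereDist p.1 p.2.1) * φ (sphereDist p.1 p.2.2) *
        ⟪sphereW p.1 p.2.1, sphereW p.1 p.2.2⟫ ∂(σ.prod (σ.prod σ)) = 0 :=
  sphere_crossTerm_zero_general n σ hσsphere hσinv φ
end

section
/- Fix integers n ≥ 1 and N ≥ 2 and let μ be any Borel probability measure on (𝕊^n)^N. Then for every measurable φ : [0,π] → ℝ with ‖φ‖²_{L²(ρ)} := (1/(N(N−1))) Σ_{i ≠ j} ∫ φ(d(x_i,x_j))² d(x_i,x_j)² dμ(X) < ∞, one has ‖f_φ‖²_{L²(μ)} ≤ ((N−1)/N)² ‖φ‖²_{L²(ρ)}. -/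
open MeasureTheory Finset
open scoped ENNReal RealInnerProductSpace

/-- The interaction velocity field on the sphere:
`f_φ(X)_i = (1/N) ∑_{j ≠ i} φ(d(x_i,x_j)) w(x_i,x_j)`. -/
noncomputable def sphereField (n N : ℕ) (φ : ℝ → ℝ)
    (X : Fin N → EuclideanSpace ℝ (Fin (n + 1))) (i : Fin N) :
    EuclideanSpace ℝ (Fin (n + 1)) :=
  (N : ℝ)⁻¹ • ∑ j ∈ Finset.univ.erase i, φ (sphereDist (X i) (X j)) • sphereW (X i) (X j)

/-- The squared `L²(ρ)` norm on the sphere: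
`‖φ‖²_{L²(ρ)} = (1/(N(N−1))) ∑_{i≠j} ∫ φ(d(x_i,x_j))² d(x_i,x_j)² dμ(X)`. -/
noncomputable def sphereRhoSqNorm (n N : ℕ)
    (μ : Measure (Fin N → EuclideanSpace ℝ (Fin (n + 1)))) (φ : ℝ → ℝ) : ℝ≥0∞ :=
  ((N * (N - 1) : ℕ) : ℝ≥0∞)⁻¹ *
    ∑ i : Fin N, ∑ j ∈ Finset.univ.erase i,
      ∫⁻ X, ENNReal.ofReal
        ((φ (sphereDist (X i) (X j))) ^ 2 * (sphereDist (X i) (X j)) ^ 2) ∂μ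

/-- The squared `L²(μ)` norm of the interaction field on the sphere. -/
noncomputable def sphereFieldSqNorm (n N : ℕ)
    (μ : Measure (Fin N → EuclideanSpace ℝ (Fin (n + 1)))) (φ : ℝ → ℝ) : ℝ≥0∞ :=
  ∫⁻ X, ENNReal.ofReal ((N : ℝ)⁻¹ * ∑ i : Fin N, ‖sphereField n N φ X i‖ ^ 2) ∂μ

lemma sphereDist_nonneg {n : ℕ} (x y : EuclideanSpace ℝ (Fin (n + 1))) :
    0 ≤ sphereDist x y := Real.arccos_nonneg _

lemma norm_sphereW_le {n : ℕ} (x y : EuclideanSpace ℝ (Fin (n + 1))) :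
    ‖sphereW x y‖ ≤ sphereDist x y := by
  classical
  unfold sphereW
  split_ifs with h
  · simpa using sphereDist_nonneg x y
  · rw [norm_smul, norm_smul, norm_inv, norm_norm,
      Real.norm_of_nonneg (sphereDist_nonneg x y)]
    have hd := sphereDist_nonneg x y
    set v := y - ⟪x, y⟫ • x
    rcases eq_or_ne ‖v‖ 0 with hv | hv
    · rw [hv, mul_zero, mul_zero]; exact hd
    · rw [inv_mul_cancel₀ hv, mul_one]

lemma measurable_sphereDist {n N : ℕ} (i j : Fin N) :
    Measurable fun X : Fin N → EuclideanSpace ℝ (Fin (n + 1)) =>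
      sphereDist (X i) (X j) := by
  have h1 : Measurable fun X : Fin N → EuclideanSpace ℝ (Fin (n + 1)) =>
      (⟪X i, X j⟫ : ℝ) :=
    Measurable.inner (measurable_pi_apply i) (measurable_pi_apply j)
  exact Real.continuous_arccos.measurable.comp h1

lemma sphere_pointwise_bound (n N : ℕ) (hN : 2 ≤ N) (φ : ℝ → ℝ)
    (X : Fin N → EuclideanSpace ℝ (Fin (n + 1))) :
    (N : ℝ)⁻¹ * ∑ i : Fin N, ‖sphereField n N φ X i‖ ^ 2 ≤
      (((N : ℝ) - 1) / (N : ℝ) ^ 3) *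
        ∑ i : Fin N, ∑ j ∈ Finset.univ.erase i,
          (φ (sphereDist (X i) (X j))) ^ 2 * (sphereDist (X i) (X j)) ^ 2 := by
  have hN0 : (0 : ℝ) < (N : ℝ) := by
    have : 0 < N := lt_of_lt_of_le (by norm_num) hN
    exact_mod_cast this
  -- per-index bound
  have key : ∀ i : Fin N, ‖sphereField n N φ X i‖ ^ 2 ≤
      (((N : ℝ) - 1) / (N : ℝ) ^ 2) *
        ∑ j ∈ Finset.univ.erase i,
          (φ (sphereDist (X i) (X j))) ^ 2 * (sphereDist (X i) (X j)) ^ 2 := by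
    intro i
    set b : Fin N → ℝ := fun j => |φ (sphereDist (X i) (X j))| * sphereDist (X i) (X j)
      with hb
    have hbnn : ∀ j, 0 ≤ b j := fun j =>
      mul_nonneg (abs_nonneg _) (sphereDist_nonneg _ _)
    have h1 : ‖sphereField n N φ X i‖ ≤ (N : ℝ)⁻¹ * ∑ j ∈ Finset.univ.erase i, b j := by
      unfold sphereField
      rw [norm_smul, norm_inv, Real.norm_natCast]
      refine mul_le_mul_of_nonneg_left ?_ (by positivity)
      refine (norm_sum_le _ _).trans (Finset.sum_le_sum fun j _ => ?_)
      rw [norm_smul]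
      exact mul_le_mul_of_nonneg_left (norm_sphereW_le _ _) (norm_nonneg _)
    have h2 : ‖sphereField n N φ X i‖ ^ 2 ≤
        ((N : ℝ)⁻¹ * ∑ j ∈ Finset.univ.erase i, b j) ^ 2 := by
      have := norm_nonneg (sphereField n N φ X i)
      nlinarith [h1]
    have h3 : (∑ j ∈ Finset.univ.erase i, b j) ^ 2 ≤
        ((Finset.univ.erase i).card : ℝ) * ∑ j ∈ Finset.univ.erase i, b j ^ 2 :=
      sq_sum_le_card_mul_sum_sq
    have hcard : ((Finset.univ.erase i).card : ℝ) = (N : ℝ) - 1 := by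
      rw [Finset.card_erase_of_mem (Finset.mem_univ i)]
      simp only [Finset.card_univ, Fintype.card_fin]
      have : 1 ≤ N := le_trans (by norm_num) hN
      push_cast [Nat.cast_sub this]
      ring
    have h4 : ∀ j, b j ^ 2 =
        (φ (sphereDist (X i) (X j))) ^ 2 * (sphereDist (X i) (X j)) ^ 2 := by
      intro j
      rw [hb, mul_pow, sq_abs]
    calc ‖sphereField n N φ X i‖ ^ 2
        ≤ ((N : ℝ)⁻¹ * ∑ j ∈ Finset.univ.erase i, b j) ^ 2 := h2
      _ = (N : ℝ)⁻¹ ^ 2 * (∑ j ∈ Finset.univ.erase i, b j) ^ 2 := by ring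
      _ ≤ (N : ℝ)⁻¹ ^ 2 * (((N : ℝ) - 1) * ∑ j ∈ Finset.univ.erase i, b j ^ 2) := by
          refine mul_le_mul_of_nonneg_left ?_ (by positivity)
          rw [← hcard]; exact h3
      _ = (((N : ℝ) - 1) / (N : ℝ) ^ 2) * ∑ j ∈ Finset.univ.erase i, b j ^ 2 := by
          ring
      _ = (((N : ℝ) - 1) / (N : ℝ) ^ 2) *
            ∑ j ∈ Finset.univ.erase i,
              (φ (sphereDist (X i) (X j))) ^ 2 * (sphereDist (X i) (X j)) ^ 2 := by
          congr 1
          exact Finset.sum_congr rfl fun j _ => h4 j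
  have hsum : ∑ i : Fin N, ‖sphereField n N φ X i‖ ^ 2 ≤
      (((N : ℝ) - 1) / (N : ℝ) ^ 2) *
        ∑ i : Fin N, ∑ j ∈ Finset.univ.erase i,
          (φ (sphereDist (X i) (X j))) ^ 2 * (sphereDist (X i) (X j)) ^ 2 := by
    rw [Finset.mul_sum]
    exact Finset.sum_le_sum fun i _ => key i
  calc (N : ℝ)⁻¹ * ∑ i : Fin N, ‖sphereField n N φ X i‖ ^ 2
      ≤ (N : ℝ)⁻¹ * ((((N : ℝ) - 1) / (N : ℝ) ^ 2) *
          ∑ i : Fin N, ∑ j ∈ Finset.univ.erase i,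
            (φ (sphereDist (X i) (X j))) ^ 2 * (sphereDist (X i) (X j)) ^ 2) :=
        mul_le_mul_of_nonneg_left hsum (by positivity)
    _ = (((N : ℝ) - 1) / (N : ℝ) ^ 3) *
          ∑ i : Fin N, ∑ j ∈ Finset.univ.erase i,
            (φ (sphereDist (X i) (X j))) ^ 2 * (sphereDist (X i) (X j)) ^ 2 := by
        ring

/-- boundedness on the sphere:
`‖f_φ‖²_{L²(μ)} ≤ ((N−1)/N)²‖φ‖²_{L²(ρ)}` for any Borel probability measure `μ` on
`(𝕊^n)^N`. -/
theorem sphere_boundedness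
    (n N : ℕ) (hn : 1 ≤ n) (hN : 2 ≤ N)
    (μ : Measure (Fin N → EuclideanSpace ℝ (Fin (n + 1)))) [IsProbabilityMeasure μ]
    (hsupp : μ {X : Fin N → EuclideanSpace ℝ (Fin (n + 1)) |
        ∀ i, X i ∈ Metric.sphere (0 : EuclideanSpace ℝ (Fin (n + 1))) 1}ᶜ = 0)
    (φ : ℝ → ℝ) (hφ : Measurable φ)
    (hρfin : sphereRhoSqNorm n N μ φ ≠ ⊤) :
    sphereFieldSqNorm n N μ φ ≤
      ENNReal.ofReal ((((N : ℝ) - 1) / (N : ℝ)) ^ 2) * sphereRhoSqNorm n N μ φ := by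
  have hN0 : (0 : ℝ) < (N : ℝ) := by
    have : 0 < N := lt_of_lt_of_le (by norm_num) hN
    exact_mod_cast this
  have hN1 : (1 : ℝ) ≤ (N : ℝ) := by
    have : 1 ≤ N := le_trans (by norm_num) hN
    exact_mod_cast this
  set c : ℝ := ((N : ℝ) - 1) / (N : ℝ) ^ 3 with hc
  have hc0 : 0 ≤ c := by
    apply div_nonneg (by linarith) (by positivity)
  -- measurability of the summands
  have hmeas : ∀ i j : Fin N, Measurable fun X : Fin N → EuclideanSpace ℝ (Fin (n + 1)) =>
      ENNReal.ofReal
        ((φ (sphereDist (X i) (X j))) ^ 2 * (sphereDist (X i) (X j)) ^ 2) := by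
    intro i j
    have hd := measurable_sphereDist (n := n) i j
    exact ENNReal.measurable_ofReal.comp (((hφ.comp hd).pow_const 2).mul (hd.pow_const 2))
  -- step 1: pointwise bound inside the integral
  have step1 : sphereFieldSqNorm n N μ φ ≤
      ∫⁻ X, ENNReal.ofReal (c * ∑ i : Fin N, ∑ j ∈ Finset.univ.erase i,
        (φ (sphereDist (X i) (X j))) ^ 2 * (sphereDist (X i) (X j)) ^ 2) ∂μ := by
    refine lintegral_mono fun X => ?_
    exact ENNReal.ofReal_le_ofReal (sphere_pointwise_bound n N hN φ X)
  -- step 2: rewrite the integral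
  have step2 : (∫⁻ X, ENNReal.ofReal (c * ∑ i : Fin N, ∑ j ∈ Finset.univ.erase i,
        (φ (sphereDist (X i) (X j))) ^ 2 * (sphereDist (X i) (X j)) ^ 2) ∂μ) =
      ENNReal.ofReal c * ∑ i : Fin N, ∑ j ∈ Finset.univ.erase i,
        ∫⁻ X, ENNReal.ofReal
          ((φ (sphereDist (X i) (X j))) ^ 2 * (sphereDist (X i) (X j)) ^ 2) ∂μ := by
    have heq : ∀ X : Fin N → EuclideanSpace ℝ (Fin (n + 1)),
        ENNReal.ofReal (c * ∑ i : Fin N, ∑ j ∈ Finset.univ.erase i,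
          (φ (sphereDist (X i) (X j))) ^ 2 * (sphereDist (X i) (X j)) ^ 2) =
        ENNReal.ofReal c * ∑ i : Fin N, ∑ j ∈ Finset.univ.erase i,
          ENNReal.ofReal
            ((φ (sphereDist (X i) (X j))) ^ 2 * (sphereDist (X i) (X j)) ^ 2) := by
      intro X
      rw [ENNReal.ofReal_mul hc0]
      congr 1
      rw [ENNReal.ofReal_sum_of_nonneg (fun i _ => Finset.sum_nonneg fun j _ => by positivity)]
      exact Finset.sum_congr rfl fun i _ =>
        ENNReal.ofReal_sum_of_nonneg fun j _ => by positivity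
    simp_rw [heq]
    rw [lintegral_const_mul' _ _ ENNReal.ofReal_ne_top]
    congr 1
    rw [lintegral_finset_sum _ fun i _ => Finset.measurable_sum _ fun j _ => hmeas i j]
    exact Finset.sum_congr rfl fun i _ => lintegral_finset_sum _ fun j _ => hmeas i j
  -- step 3: constants match
  have hconst : ENNReal.ofReal c =
      ENNReal.ofReal ((((N : ℝ) - 1) / (N : ℝ)) ^ 2) * ((N * (N - 1) : ℕ) : ℝ≥0∞)⁻¹ := by
    have hm : (0 : ℝ) < ((N * (N - 1) : ℕ) : ℝ) := by
      have h1 : 0 < N * (N - 1) := by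
        apply Nat.mul_pos (lt_of_lt_of_le (by norm_num) hN)
        omega
      exact_mod_cast h1
    rw [← ENNReal.ofReal_natCast, ← ENNReal.ofReal_inv_of_pos hm,
      ← ENNReal.ofReal_mul (by positivity)]
    congr 1
    have hsub : ((N - 1 : ℕ) : ℝ) = (N : ℝ) - 1 := by
      have : 1 ≤ N := le_trans (by norm_num) hN
      push_cast [Nat.cast_sub this]; ring
    rw [hc]
    push_cast [hsub]
    have hN1' : (N : ℝ) - 1 ≠ 0 := by
      have : (2 : ℝ) ≤ (N : ℝ) := by exact_mod_cast hN
      linarith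
    field_simp
  rw [sphereRhoSqNorm, ← mul_assoc, ← hconst]
  exact step1.trans (le_of_eq step2)
end
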